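/- arXiv:2205.12423 — 3 statements merged into one kernel-verified Lean document; each statement's English description precedes it below -/
import Mathlib

section
/- Let g : {0,1}^n → ℝ and define AUC = Σ_{j=0}^{n} g(e_{1:j}), where e_{1:j} is the indicator vector of {1,...,j} (with e_{1:0} = 0). Then AUC = Σ_{u ⊆ {1,...,n}} (n − ⌈u⌉ + 1) · Δ_u, where Δ_u = Σ_{v ⊆ u} (−1)^{|u|−|v|} g(e_v) and ⌈u⌉ = max u with ⌈∅⌉ = 0. -/
open Finset

/-- The anchored interaction `Δ_u = Σ_{v ⊆ u} (−1)^{|u|−|v|} g(e_v)`, where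
points of `{0,1}^n` are identified with subsets of `Fin n` (so `e_v` is `v`). -/
noncomputable def interaction {n : ℕ} (g : Finset (Fin n) → ℝ)
    (u : Finset (Fin n)) : ℝ :=
  ∑ v ∈ u.powerset, (-1 : ℝ) ^ (u.card - v.card) * g v

/-- `⌈u⌉`: the maximum of `u` viewed as a subset of `{1,...,n}` (coordinate
`i : Fin n` corresponds to variable `i+1`), with `⌈∅⌉ = 0`. -/
def ceilSet {n : ℕ} (u : Finset (Fin n)) : ℕ :=
  u.sup fun i => i.val + 1

/-!
Möbius inversion on the Boolean lattice gives `g w = Σ_{u ⊆ w} Δ_u`. Applied to the prefix sets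
`e_{1:j}`, the interaction `Δ_u` enters `g(e_{1:j})` exactly when `⌈u⌉ ≤ j`, which happens for
`n + 1 − ⌈u⌉` of the indices `j = 0, …, n`.
-/

section MoebiusInversion

variable {α R : Type*} [DecidableEq α] [Ring R]

theorem Finset.sum_Icc_neg_one_pow_card_sub {v w : Finset α} (hvw : v ⊆ w) :
    ∑ u ∈ Icc v w, (-1 : R) ^ (#u - #v) = if v = w then 1 else 0 := by
  have hdisj : ∀ s ∈ (w \ v).powerset, Disjoint v s := fun s hs =>
    disjoint_of_subset_right (mem_powerset.1 hs) disjoint_sdiff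
  have hinj : Set.InjOn (v ∪ ·) ((w \ v).powerset : Set (Finset α)) := fun s hs t ht hst => by
    simpa [union_sdiff_cancel_left (hdisj s hs), union_sdiff_cancel_left (hdisj t ht)] using
      congrArg (· \ v) hst
  rw [Icc_eq_image_powerset hvw, sum_image hinj]
  rw [sum_congr rfl fun s hs => by
    rw [card_union_of_disjoint (hdisj s hs), Nat.add_sub_cancel_left]]
  have hZ := congrArg (Int.cast : ℤ → R) (sum_powerset_neg_one_pow_card (x := w \ v))
  push_cast at hZ
  rw [hZ]
  exact if_congr (sdiff_eq_empty_iff_subset.trans ⟨subset_antisymm hvw, fun h => h ▸ subset_rfl⟩)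
    rfl rfl

theorem Finset.sum_powerset_sum_powerset_neg_one_pow_mul (f : Finset α → R) (w : Finset α) :
    ∑ u ∈ w.powerset, ∑ v ∈ u.powerset, (-1 : R) ^ (#u - #v) * f v = f w := by
  rw [sum_comm' (t' := w.powerset) (s' := fun v => Icc v w) fun u v => by
    simp only [mem_powerset, mem_Icc]
    exact ⟨fun ⟨huw, hvu⟩ => ⟨⟨hvu, huw⟩, hvu.trans huw⟩, fun ⟨⟨hvu, huw⟩, _⟩ => ⟨huw, hvu⟩⟩]
  rw [sum_congr rfl fun v hv => by
    rw [← sum_mul, sum_Icc_neg_one_pow_card_sub (mem_powerset.1 hv), ite_mul, one_mul, zero_mul]]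
  simp

end MoebiusInversion

theorem sum_powerset_interaction {n : ℕ} (g : Finset (Fin n) → ℝ) (w : Finset (Fin n)) :
    ∑ u ∈ w.powerset, interaction g u = g w :=
  sum_powerset_sum_powerset_neg_one_pow_mul g w

theorem subset_filter_val_lt_iff_ceilSet_le {n : ℕ} (u : Finset (Fin n)) (j : ℕ) :
    u ⊆ univ.filter (fun i : Fin n => i.val < j) ↔ ceilSet u ≤ j := by
  simp [ceilSet, subset_iff]

theorem Finset.sum_range_ite_le {M : Type*} [AddCommMonoid M] (n c : ℕ) (x : M) :
    ∑ j ∈ range n, (if c ≤ j then x else 0) = (n - c) • x := by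
  rw [← sum_filter, sum_const]
  congr 1
  rw [show (range n).filter (c ≤ ·) = Ico c n by ext; simp [and_comm], Nat.card_Ico]

/-- `AUC = Σ_{j=0}^{n} g(e_{1:j}) = Σ_{u ⊆ {1,...,n}} (n − ⌈u⌉ + 1) Δ_u`,
where `e_{1:j}` is the indicator of the first `j` coordinates. -/
theorem auc_eq_sum_interactions {n : ℕ} (g : Finset (Fin n) → ℝ) :
    ∑ j ∈ Finset.range (n + 1), g (univ.filter fun i : Fin n => i.val < j)
      = ∑ u : Finset (Fin n), ((n + 1 - ceilSet u : ℕ) : ℝ) * interaction g u := by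
  calc ∑ j ∈ range (n + 1), g (univ.filter fun i : Fin n => i.val < j)
      = ∑ j ∈ range (n + 1), ∑ u : Finset (Fin n),
          if ceilSet u ≤ j then interaction g u else 0 := by
        refine sum_congr rfl fun j _ => ?_
        simp_rw [← sum_powerset_interaction g, ← subset_filter_val_lt_iff_ceilSet_le, ← sum_filter,
          filter_subset_univ]
    _ = ∑ u : Finset (Fin n), ((n + 1 - ceilSet u : ℕ) : ℝ) * interaction g u := by
        rw [sum_comm]
        simp_rw [sum_range_ite_le, nsmul_eq_mul]
end

section
/- There exists a function g : {0,1}^3 → ℝ whose Shapley values satisfy φ_1 > φ_2 > φ_3, yet the insertion AUC of the ordering (1,3,2) strictly exceeds that of (1,2,3). In particular, g with anchored interactions Δ_1 = 3, Δ_2 = 2, Δ_3 = 1, Δ_{1,2} = A for any A with −2 < A < −1, and all other Δ_u = 0, is such a function. -/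
/-!
The Shapley value splits the interaction `A` of players 1 and 2 evenly between them, so
`φ = (3 + A/2, 2 + A/2, 1)`, which is strictly decreasing as soon as `A > -2`. The insertion AUCs
of the orderings `(1,3,2)` and `(1,2,3)` differ only in the second prefix, where they take the
values `g{1,3} = 4` and `g{1,2} = 5 + A`; a negative interaction `A < -1` makes the latter smaller.
-/

open Finset

/-- Shapley value of coordinate `j` for `g : {0,1}^n → ℝ`, with points of
`{0,1}^n` identified with subsets of `Fin n`:
`φ_j = Σ_{S ⊆ {1,...,n}\{j}} |S|!(n−|S|−1)!/n! (g(e_{S∪{j}}) − g(e_S))`. -/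
noncomputable def shapley {n : ℕ} (g : Finset (Fin n) → ℝ) (j : Fin n) : ℝ :=
  ∑ S ∈ ((univ : Finset (Fin n)).erase j).powerset,
    ((S.card.factorial * (n - S.card - 1).factorial : ℕ) : ℝ) / (n.factorial : ℝ)
      * (g (insert j S) - g S)

/-- The function on `{0,1}^3` with anchored interactions `Δ₁ = 3`, `Δ₂ = 2`,
`Δ₃ = 1`, `Δ_{1,2} = A` and all other `Δ_u = 0`. -/
noncomputable def gA (A : ℝ) (w : Finset (Fin 3)) : ℝ :=
  3 * (if (0 : Fin 3) ∈ w then (1 : ℝ) else 0)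
    + 2 * (if (1 : Fin 3) ∈ w then (1 : ℝ) else 0)
    + (if (2 : Fin 3) ∈ w then (1 : ℝ) else 0)
    + (if (0 : Fin 3) ∈ w ∧ (1 : Fin 3) ∈ w then A else 0)

theorem shapley_fin_three (g : Finset (Fin 3) → ℝ) (j : Fin 3) :
    shapley g j = ((g {j} - g ∅) + (g univ - g {j + 1, j + 2})) / 3
      + ((g {j, j + 1} - g {j + 1}) + (g {j, j + 2} - g {j + 2})) / 6 := by
  have herase : (univ : Finset (Fin 3)).erase j = insert (j + 1) (insert (j + 2) ∅) := by
    fin_cases j <;> decide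
  have hne : j + 1 ≠ j + 2 := by simp
  have huniv : insert j {j + 1, j + 2} = (univ : Finset (Fin 3)) := by fin_cases j <;> decide
  rw [shapley, herase, sum_powerset_insert (by simp),
    sum_powerset_insert (notMem_empty _), sum_powerset_insert (notMem_empty _), powerset_empty]
  simp only [sum_singleton, insert_empty_eq, huniv, card_empty, card_singleton, card_pair hne]
  norm_num [Nat.factorial]
  ring

theorem shapley_gA_zero (A : ℝ) : shapley (gA A) 0 = 3 + A / 2 := by
  rw [shapley_fin_three]; grind [gA]

theorem shapley_gA_one (A : ℝ) : shapley (gA A) 1 = 2 + A / 2 := by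
  rw [shapley_fin_three]; grind [gA]

theorem shapley_gA_two (A : ℝ) : shapley (gA A) 2 = 1 := by
  rw [shapley_fin_three]; grind [gA]

theorem gA_pair_zero_two (A : ℝ) : gA A {0, 2} = 4 := by
  norm_num [gA, Fin.ext_iff]

theorem gA_pair_zero_one (A : ℝ) : gA A {0, 1} = 5 + A := by
  norm_num [gA, Fin.ext_iff]

/-- There is a function `g : {0,1}^3 → ℝ` with Shapley values
`φ₁ > φ₂ > φ₃` for which the insertion AUC of the ordering `(1,3,2)`
strictly exceeds that of `(1,2,3)`; in particular `gA A` is such a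
function whenever `−2 < A < −1`. -/
theorem shapley_order_not_optimal_for_auc :
    (∃ g : Finset (Fin 3) → ℝ,
        (shapley g 0 > shapley g 1 ∧ shapley g 1 > shapley g 2) ∧
        g ∅ + g {0} + g {0, 2} + g univ > g ∅ + g {0} + g {0, 1} + g univ)
    ∧ ∀ A : ℝ, -2 < A → A < -1 →
        (shapley (gA A) 0 > shapley (gA A) 1
          ∧ shapley (gA A) 1 > shapley (gA A) 2) ∧
        gA A ∅ + gA A {0} + gA A {0, 2} + gA A univ
          > gA A ∅ + gA A {0} + gA A {0, 1} + gA A univ := by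
  have key : ∀ A : ℝ, -2 < A → A < -1 →
      (shapley (gA A) 0 > shapley (gA A) 1 ∧ shapley (gA A) 1 > shapley (gA A) 2) ∧
      gA A ∅ + gA A {0} + gA A {0, 2} + gA A univ
        > gA A ∅ + gA A {0} + gA A {0, 1} + gA A univ := by
    intro A hlo hhi
    rw [shapley_gA_zero, shapley_gA_one, shapley_gA_two, gA_pair_zero_two, gA_pair_zero_one]
    exact ⟨⟨by linarith, by linarith⟩, by linarith⟩
  exact ⟨⟨gA (-3 / 2), key (-3 / 2) (by norm_num) (by norm_num)⟩, key⟩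
end

section
/- Let h : ℝ → ℝ be nondecreasing, β_0 ∈ ℝ, and β_1 ≥ β_2 ≥ ... ≥ β_n. For a permutation π of {1,...,n}, let AUC(π) = Σ_{j=0}^n h(β_0 + Σ_{ℓ=1}^j β_{π(ℓ)}). Then the identity permutation maximizes AUC over all permutations. -/
open Finset

/-- `AUC(π) = Σ_{j=0}^n h(β₀ + Σ_{ℓ=1}^j β_{π(ℓ)})`, where positions
`1,...,n` are represented by `Fin n` (position `ℓ` has `ℓ.val = ℓ − 1`). -/
noncomputable def aucMono {n : ℕ} (h : ℝ → ℝ) (β₀ : ℝ) (β : Fin n → ℝ)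
    (π : Equiv.Perm (Fin n)) : ℝ :=
  ∑ j ∈ Finset.range (n + 1),
    h (β₀ + ∑ l ∈ univ.filter fun i : Fin n => i.val < j, β (π l))

/-- Rearrangement inequality, with the `ℕ`-valued indicator of `s` as a weight that
monovaries with `g`. -/
theorem Finset.sum_comp_perm_le_of_isLowerSet {ι β : Type*} [LinearOrder ι] [Fintype ι]
    [AddCommMonoid β] [LinearOrder β] [IsOrderedCancelAddMonoid β]
    {s : Finset ι} (hs : IsLowerSet (s : Set ι)) {g : ι → β} (hg : Antitone g)
    (σ : Equiv.Perm ι) : ∑ i ∈ s, g (σ i) ≤ ∑ i ∈ s, g i := by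
  set f : ι → ℕ := fun i => if i ∈ s then 1 else 0
  have hf : Antitone f := fun i j hij => by
    by_cases hj : j ∈ s
    · have hi : i ∈ s := hs hij hj
      simp [f, hi, hj]
    · simp [f, hj]
  have weighted (u : ι → β) : ∑ i, f i • u i = ∑ i ∈ s, u i := by
    simp [f, ite_smul, Finset.sum_ite_mem]
  rw [← weighted, ← weighted]
  exact (hf.monovary hg).sum_smul_comp_perm_le_sum_smul

theorem Fin.isLowerSet_filter_val_lt (n j : ℕ) :
    IsLowerSet ((univ.filter fun i : Fin n => i.val < j : Finset (Fin n)) : Set (Fin n)) :=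
  fun a b hba ha => by
    simp only [coe_filter, mem_univ, true_and, Set.mem_ofPred_eq] at ha ⊢
    exact lt_of_le_of_lt hba ha

/-- If `h` is nondecreasing and `β₁ ≥ β₂ ≥ ⋯ ≥ β_n`, then the identity
permutation maximizes `AUC` over all permutations. -/
theorem identity_maximizes_auc (n : ℕ) (h : ℝ → ℝ) (hh : Monotone h)
    (β₀ : ℝ) (β : Fin n → ℝ) (hβ : ∀ i j : Fin n, i ≤ j → β j ≤ β i) :
    ∀ π : Equiv.Perm (Fin n),
      aucMono h β₀ β π ≤ aucMono h β₀ β (Equiv.refl (Fin n)) := by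
  intro π
  refine Finset.sum_le_sum fun j _ => hh (add_le_add_right ?_ β₀)
  exact Finset.sum_comp_perm_le_of_isLowerSet (Fin.isLowerSet_filter_val_lt n j) hβ π
end
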